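/- arXiv:1702.02610 — 4 statements merged into one kernel-verified Lean document; each statement's English description precedes it below -/
import Mathlib

section
/- Define T₁(η,ζ,τ) = w³/τ² + 27/4 for real η, ζ, τ with τ ≠ 0, where w = (η+i)² + (ζ+i)². Then there exist R > 0 and R' > 0 such that for all (η,ζ,τ) with τ ≠ 0 satisfying either η² + ζ² > R² or |τ| ≥ R', one has |T₁(η,ζ,τ)| ≥ 27/8. -/
/-!
Write `w = (η+i)² + (ζ+i)² = (η²+ζ²-2) + 2(η+ζ)i`. When `η² + ζ²` is large, `Re w` dominates
`√3 |Im w|`, so `w` lies in the sector `|arg w| ≤ π/6`, `Re w³ ≥ 0`, and the real part of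
`w³/τ² + 27/4` is already at least `27/4`. When `η² + ζ²` is bounded, `|w| ≤ η² + ζ² + 2` is
bounded too, so for large `|τ|` the term `w³/τ²` has modulus at most `27/8`.
-/

open Complex

lemma re_pow_three_nonneg {z : ℂ} (hre : 0 ≤ z.re) (hsector : 3 * z.im ^ 2 ≤ z.re ^ 2) :
    0 ≤ (z ^ 3).re := by
  have hcube : (z ^ 3).re = z.re * (z.re ^ 2 - 3 * z.im ^ 2) := by
    simp only [pow_succ, pow_zero, one_mul, mul_re, mul_im]
    ring
  rw [hcube]
  exact mul_nonneg hre (by linarith)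

lemma le_norm_add_ofReal_of_re_nonneg {z : ℂ} (hz : 0 ≤ z.re) (c : ℝ) : c ≤ ‖z + c‖ :=
  calc c ≤ (z + c).re := by simpa using hz
    _ ≤ ‖z + c‖ := re_le_norm _

lemma abs_sub_norm_le_norm_add_ofReal (z : ℂ) (c : ℝ) : |c| - ‖z‖ ≤ ‖z + c‖ := by
  simpa [add_comm] using norm_sub_norm_le (c : ℂ) (-z)

lemma norm_ofReal_add_I_sq (x : ℝ) : ‖((x : ℂ) + I) ^ 2‖ = x ^ 2 + 1 := by
  rw [norm_pow, Complex.sq_norm, normSq_apply]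
  simp only [add_re, add_im, ofReal_re, ofReal_im, I_re, I_im]
  ring

lemma re_ofReal_add_I_sq_add (η ζ : ℝ) :
    (((η : ℂ) + I) ^ 2 + ((ζ : ℂ) + I) ^ 2).re = η ^ 2 + ζ ^ 2 - 2 := by
  simp only [sq, add_re, mul_re, add_im, ofReal_re, ofReal_im, I_re, I_im]
  ring

lemma im_ofReal_add_I_sq_add (η ζ : ℝ) :
    (((η : ℂ) + I) ^ 2 + ((ζ : ℂ) + I) ^ 2).im = 2 * (η + ζ) := by
  simp only [sq, add_re, mul_im, add_im, ofReal_re, ofReal_im, I_re, I_im]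
  ring

lemma re_ofReal_add_I_sq_add_pow_three_nonneg {η ζ : ℝ} (h : 36 < η ^ 2 + ζ ^ 2) :
    0 ≤ ((((η : ℂ) + I) ^ 2 + ((ζ : ℂ) + I) ^ 2) ^ 3).re := by
  apply re_pow_three_nonneg
  · rw [re_ofReal_add_I_sq_add]
    linarith
  · rw [re_ofReal_add_I_sq_add, im_ofReal_add_I_sq_add]
    nlinarith [sq_nonneg (η - ζ)]

lemma norm_ofReal_add_I_sq_add_le (η ζ : ℝ) :
    ‖((η : ℂ) + I) ^ 2 + ((ζ : ℂ) + I) ^ 2‖ ≤ η ^ 2 + ζ ^ 2 + 2 :=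
  calc _ ≤ ‖((η : ℂ) + I) ^ 2‖ + ‖((ζ : ℂ) + I) ^ 2‖ := norm_add_le _ _
    _ = η ^ 2 + ζ ^ 2 + 2 := by rw [norm_ofReal_add_I_sq, norm_ofReal_add_I_sq]; ring

/-- For `T₁(η,ζ,τ) = w³/τ² + 27/4` with `w = (η+i)² + (ζ+i)²`, there are
`R > 0` and `R' > 0` such that `|T₁| ≥ 27/8` whenever `η² + ζ² > R²` or `|τ| ≥ R'`. -/
theorem stmt_1 :
    ∃ R > (0 : ℝ), ∃ R' > (0 : ℝ), ∀ η ζ τ : ℝ, τ ≠ 0 →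
      (η ^ 2 + ζ ^ 2 > R ^ 2 ∨ |τ| ≥ R') →
      ‖
        ((((η : ℂ) + I) ^ 2 + ((ζ : ℂ) + I) ^ 2) ^ 3 / (τ : ℂ) ^ 2 + 27 / 4)‖
        ≥ 27 / 8 := by
  refine ⟨6, by norm_num, 128, by norm_num, fun η ζ τ _ h => ?_⟩
  set w := ((η : ℂ) + I) ^ 2 + ((ζ : ℂ) + I) ^ 2
  have hc : ((27 / 4 : ℝ) : ℂ) = 27 / 4 := by push_cast; rfl
  rw [← hc]
  by_cases hs : η ^ 2 + ζ ^ 2 > 6 ^ 2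
  · have hre : 0 ≤ (w ^ 3 / (τ : ℂ) ^ 2).re := by
      rw [← ofReal_pow, div_ofReal_re]
      exact div_nonneg (re_ofReal_add_I_sq_add_pow_three_nonneg (by linarith)) (sq_nonneg τ)
    linarith [le_norm_add_ofReal_of_re_nonneg hre (27 / 4)]
  · have hτ' : 128 ≤ |τ| := h.resolve_left hs
    have hsmall : ‖w ^ 3 / (τ : ℂ) ^ 2‖ ≤ 27 / 8 := by
      rw [norm_div, norm_pow, norm_pow, norm_real, Real.norm_eq_abs]
      have hw38 : ‖w‖ ≤ 38 := by linarith [norm_ofReal_add_I_sq_add_le η ζ]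
      calc ‖w‖ ^ 3 / |τ| ^ 2 ≤ 38 ^ 3 / 128 ^ 2 := by gcongr
        _ ≤ 27 / 8 := by norm_num
    have htri := abs_sub_norm_le_norm_add_ofReal (w ^ 3 / (τ : ℂ) ^ 2) (27 / 4)
    rw [abs_of_pos (by norm_num)] at htri
    linarith
end

section
/- Let δ ∈ (0,1) be such that |z + 1/3| < δ/3 implies |1/(z(z+1)²) + 27/4| < 27/8 for z ∈ ℂ. Let w, τ ∈ ℂ be nonzero with |w³/τ² + 27/4| ≥ 27/8, and let v be a root of v³ + wv − τ. Then |3v² + w| ≥ δ|w|. -/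
/-!
Put `z = v² / w`. Since `τ = v (v² + w)`, the quantity `w³/τ²` equals `1 / (z (z + 1)²)`, while
`z + 1/3 = (3v² + w) / (3w)`. So if `|3v² + w| < δ|w|`, then `|z + 1/3| < δ/3`, and the hypothesis
on `δ` would give `|w³/τ² + 27/4| < 27/8`.
-/

theorem cube_div_sq_eq_of_cubic_root {K : Type*} [Field K] {w τ v : K} (hw : w ≠ 0) (hτ : τ ≠ 0)
    (hv : v ^ 3 + w * v - τ = 0) :
    w ^ 3 / τ ^ 2 = 1 / (v ^ 2 / w * (v ^ 2 / w + 1) ^ 2) := by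
  have hτv : τ = v * (v ^ 2 + w) := by linear_combination -hv
  have hv0 : v ≠ 0 := fun h => hτ (by simp [hτv, h])
  have hvw : v ^ 2 + w ≠ 0 := fun h => hτ (by simp [hτv, h])
  rw [hτv]
  field_simp

theorem sq_div_add_one_third {K : Type*} [Field K] [CharZero K] {w : K} (hw : w ≠ 0) (v : K) :
    v ^ 2 / w + 1 / 3 = (3 * v ^ 2 + w) / (3 * w) := by
  field_simp

theorem stmt_5_general (δ : ℝ)
    (hδ : ∀ z : ℂ, ‖z + 1 / 3‖ < δ / 3 →
      ‖1 / (z * (z + 1) ^ 2) + 27 / 4‖ < 27 / 8)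
    (w τ : ℂ) (hw : w ≠ 0) (hτ : τ ≠ 0)
    (hT : ‖w ^ 3 / τ ^ 2 + 27 / 4‖ ≥ 27 / 8)
    (v : ℂ) (hv : v ^ 3 + w * v - τ = 0) :
    ‖3 * v ^ 2 + w‖ ≥ δ * ‖w‖ := by
  by_contra! h
  have hnear : ‖v ^ 2 / w + 1 / 3‖ < δ / 3 := by
    have hw_pos : 0 < ‖w‖ := norm_pos_iff.mpr hw
    rw [sq_div_add_one_third hw, norm_div, norm_mul, Complex.norm_ofNat,
      div_lt_div_iff₀ (mul_pos three_pos hw_pos) three_pos]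
    linarith
  rw [cube_div_sq_eq_of_cubic_root hw hτ hv] at hT
  exact (hδ _ hnear).not_ge hT

/-- If `δ ∈ (0,1)` is such that `|z + 1/3| < δ/3` implies
`|1/(z(z+1)²) + 27/4| < 27/8`, and `w, τ` are nonzero with
`|w³/τ² + 27/4| ≥ 27/8`, then every root `v` of `v³ + wv − τ` satisfies
`|3v² + w| ≥ δ|w|`. -/
theorem stmt_5 (δ : ℝ) (hδ0 : 0 < δ) (hδ1 : δ < 1)
    (hδ : ∀ z : ℂ, ‖z + 1 / 3‖ < δ / 3 →
      ‖1 / (z * (z + 1) ^ 2) + 27 / 4‖ < 27 / 8)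
    (w τ : ℂ) (hw : w ≠ 0) (hτ : τ ≠ 0)
    (hT : ‖w ^ 3 / τ ^ 2 + 27 / 4‖ ≥ 27 / 8)
    (v : ℂ) (hv : v ^ 3 + w * v - τ = 0) :
    ‖3 * v ^ 2 + w‖ ≥ δ * ‖w‖ :=
  stmt_5_general δ hδ w τ hw hτ hT v hv
end

section
/- Let R > 1 and ψ(x,y,z,t) = α[(x/R + φ(t))² + y²/R² + z²/R²] with φ ∈ C^∞([0,1]). Set C̄ = max(‖φ'‖_∞, ‖φ''‖_∞, 1) and suppose α ≥ C̄R^{3/2}. Then at every point where |x/R + φ(t)| ≥ 1, one has (119/16)ψₓ⁴ψₓₓ + 3ψₓ²(ψ_y² + ψ_z²)ψₓₓ − 18ψₓₓ³ + 6ψₓₜψₓ² + ψₜₜ + 2ψₓₜ(ψ_y² + ψ_z²) ≥ 38α⁵/R⁶ + (α³/R⁴)(ψₓₓ + ψₓ²). -/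
open Real

set_option maxHeartbeats 4000000 in
/-- For `ψ(x,y,z,t) = α[(x/R + φ(t))² + y²/R² + z²/R²]` with `R > 1`,
`C̄ ≥ max(‖φ'‖_∞, ‖φ''‖_∞, 1)` and `α ≥ C̄ R^{3/2}`, at every point where
`|x/R + φ(t)| ≥ 1` one has
`(119/16)ψₓ⁴ψₓₓ + 3ψₓ²(ψ_y²+ψ_z²)ψₓₓ − 18ψₓₓ³ + 6ψₓₜψₓ² + ψₜₜ + 2ψₓₜ(ψ_y²+ψ_z²)
  ≥ 38α⁵/R⁶ + (α³/R⁴)(ψₓₓ + ψₓ²)`. -/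
theorem stmt_12 (R α Cb x y z t : ℝ) (φ : ℝ → ℝ) (hφ : ContDiff ℝ (⊤ : ℕ∞) φ)
    (hR : 1 < R) (ht : t ∈ Set.Icc (0 : ℝ) 1)
    (hCb1 : 1 ≤ Cb)
    (hCb' : ∀ s ∈ Set.Icc (0 : ℝ) 1, |deriv φ s| ≤ Cb)
    (hCb'' : ∀ s ∈ Set.Icc (0 : ℝ) 1, |deriv (deriv φ) s| ≤ Cb)
    (hα : Cb * R ^ ((3 : ℝ) / 2) ≤ α)
    (hx : 1 ≤ |x / R + φ t|)
    (ψx ψy ψz ψxx ψxt ψtt : ℝ)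
    (hψx : ψx = 2 * α / R * (x / R + φ t))
    (hψy : ψy = 2 * α * y / R ^ 2)
    (hψz : ψz = 2 * α * z / R ^ 2)
    (hψxx : ψxx = 2 * α / R ^ 2)
    (hψxt : ψxt = 2 * α / R * deriv φ t)
    (hψtt : ψtt = 2 * α * (x / R + φ t) * deriv (deriv φ) t
      + 2 * α * (deriv φ t) ^ 2) :
    119 / 16 * ψx ^ 4 * ψxx + 3 * ψx ^ 2 * (ψy ^ 2 + ψz ^ 2) * ψxx
      - 18 * ψxx ^ 3 + 6 * ψxt * ψx ^ 2 + ψtt + 2 * ψxt * (ψy ^ 2 + ψz ^ 2)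
      ≥ 38 * α ^ 5 / R ^ 6 + α ^ 3 / R ^ 4 * (ψxx + ψx ^ 2) := by
  subst hψx hψy hψz hψxx hψxt hψtt
  set u : ℝ := x / R + φ t with hu
  set p : ℝ := deriv φ t with hpdef
  set q : ℝ := deriv (deriv φ) t with hqdef
  have hp : |p| ≤ Cb := hCb' t ht
  have hq : |q| ≤ Cb := hCb'' t ht
  clear_value u p q
  have hR0 : (0 : ℝ) < R := by linarith
  have hCb0 : (0 : ℝ) < Cb := by linarith
  have hsR : R ≤ R ^ ((3 : ℝ) / 2) := by
    calc R = R ^ (1 : ℝ) := (Real.rpow_one R).symm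
    _ ≤ R ^ ((3 : ℝ) / 2) := Real.rpow_le_rpow_of_exponent_le hR.le (by norm_num)
  have hs0 : (0 : ℝ) < R ^ ((3 : ℝ) / 2) := by linarith
  have hs2 : (R ^ ((3 : ℝ) / 2)) ^ 2 = R ^ 3 := by
    rw [← Real.rpow_natCast (R ^ ((3 : ℝ) / 2)) 2, ← Real.rpow_natCast R 3,
      ← Real.rpow_mul hR0.le]
    norm_num
  have hα1 : 1 ≤ α := by nlinarith
  have hα0 : (0 : ℝ) ≤ α := by linarith
  have hR3 : (0 : ℝ) < R ^ 3 := by positivity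
  have hR6 : (0 : ℝ) < R ^ 6 := by positivity
  have hCbR3 : Cb * R ^ 3 ≤ α ^ 2 := by
    have h1 := mul_le_mul hα hα (by positivity) hα0
    have h2 := mul_le_mul_of_nonneg_right hCb1 (mul_nonneg hCb0.le hR3.le)
    nlinarith [hs2]
  have hCbR6 : Cb * R ^ 6 ≤ α ^ 4 := by
    have h1 := mul_le_mul hCbR3 hCbR3 (by positivity) (sq_nonneg α)
    have h2 := mul_le_mul_of_nonneg_right hCb1 (by positivity : (0:ℝ) ≤ Cb * R ^ 6)
    nlinarith
  clear hα hsR hs0 hs2 hφ hCb' hCb''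
  have ha1 : 1 ≤ |u| := hx
  have ha2 : |u| ^ 2 = u ^ 2 := sq_abs u
  have hu2 : 1 ≤ u ^ 2 := by nlinarith
  have hu4 : u ^ 2 ≤ u ^ 4 := by nlinarith
  have ha4 : |u| ≤ u ^ 4 := by nlinarith [abs_nonneg u]
  have hp' : -Cb ≤ p ∧ p ≤ Cb := abs_le.mp hp
  have huq : -(|u| * Cb) ≤ u * q := by
    have h1 := neg_abs_le (u * q)
    rw [abs_mul] at h1
    have h2 : |u| * |q| ≤ |u| * Cb := mul_le_mul_of_nonneg_left hq (abs_nonneg u)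
    linarith
  have hαu : Cb * R ^ 3 ≤ α ^ 2 * u ^ 2 := by
    nlinarith [mul_le_mul_of_nonneg_left hu2 (sq_nonneg α)]
  have hw : (0 : ℝ) ≤ y ^ 2 + z ^ 2 := by positivity
  have hα3 : (0 : ℝ) ≤ α ^ 3 := by positivity
  have hF : 0 ≤ 96 * α ^ 5 * u ^ 2 + 16 * α ^ 3 * p * R ^ 3 := by
    nlinarith [mul_le_mul_of_nonneg_left hαu hα3,
      mul_nonneg (mul_nonneg hα3 hR3.le) (by linarith [hp'.1] : (0:ℝ) ≤ p + Cb),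
      mul_nonneg (mul_nonneg hα3 hCb0.le) hR3.le]
  have e1 : 0 ≤ 96 * α ^ 5 * u ^ 2 * (y ^ 2 + z ^ 2)
      + 16 * α ^ 3 * p * (y ^ 2 + z ^ 2) * R ^ 3 := by
    nlinarith [mul_nonneg hw hF]
  have h2a : 0 ≤ α ^ 2 * u ^ 2 + p * R ^ 3 := by
    nlinarith [hαu, mul_nonneg (by linarith [hp'.1] : (0:ℝ) ≤ p + Cb) hR3.le]
  have e2 : 0 ≤ 48 * α ^ 5 * u ^ 4 * R ^ 2 + 48 * α ^ 3 * p * u ^ 2 * R ^ 5 := by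
    nlinarith [mul_nonneg (mul_nonneg (mul_nonneg hα3 (sq_nonneg u)) (sq_nonneg R)) h2a]
  have h3a : 0 ≤ α ^ 4 * u ^ 4 + u * q * R ^ 6 + p ^ 2 * R ^ 6 := by
    nlinarith [mul_le_mul_of_nonneg_right hCbR6 (by positivity : (0:ℝ) ≤ u ^ 4),
      mul_le_mul_of_nonneg_left ha4 (by positivity : (0:ℝ) ≤ Cb * R ^ 6),
      mul_le_mul_of_nonneg_right huq hR6.le,
      mul_nonneg (sq_nonneg p) hR6.le]
  have e3 : 0 ≤ 2 * α ^ 5 * u ^ 4 * R ^ 2 + 2 * α * u * q * R ^ 8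
      + 2 * α * p ^ 2 * R ^ 8 := by
    nlinarith [mul_nonneg (mul_nonneg hα0 (sq_nonneg R)) h3a]
  have hα2 : 1 ≤ α ^ 2 := by nlinarith
  have hu41 : 1 ≤ u ^ 4 := le_trans hu2 hu4
  have h4a : 1 ≤ α ^ 2 * u ^ 4 := by
    nlinarith [mul_le_mul hα2 hu41 zero_le_one (by positivity : (0:ℝ) ≤ α ^ 2)]
  have e4 : 0 ≤ 144 * α ^ 5 * u ^ 4 * R ^ 2 - 144 * α ^ 3 * R ^ 2 := by
    nlinarith [mul_nonneg (mul_nonneg (sq_nonneg R) hα3) (by linarith : (0:ℝ) ≤ α ^ 2 * u ^ 4 - 1)]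
  have hαp : α ^ 4 ≤ α ^ 5 := by nlinarith [pow_nonneg hα0 4]
  have h5a : 0 ≤ 44 * u ^ 4 - 40 - 4 * u ^ 2 := by nlinarith
  have h5b : 0 ≤ 44 * α ^ 5 * u ^ 4 - 38 * α ^ 5 - 2 * α ^ 4 - 4 * α ^ 5 * u ^ 2 := by
    nlinarith [mul_nonneg (pow_nonneg hα0 5) h5a]
  have e5 : 0 ≤ 44 * α ^ 5 * u ^ 4 * R ^ 2 - 38 * α ^ 5 * R ^ 2 - 2 * α ^ 4 * R ^ 2
      - 4 * α ^ 5 * u ^ 2 * R ^ 2 := by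
    nlinarith [mul_nonneg (sq_nonneg R) h5b]
  have hE : 0 ≤ 238 * α ^ 5 * u ^ 4 * R ^ 2 + 96 * α ^ 5 * u ^ 2 * (y ^ 2 + z ^ 2)
      + 16 * α ^ 3 * p * (y ^ 2 + z ^ 2) * R ^ 3 - 144 * α ^ 3 * R ^ 2
      + 48 * α ^ 3 * p * u ^ 2 * R ^ 5 + 2 * α * u * q * R ^ 8 + 2 * α * p ^ 2 * R ^ 8
      - 38 * α ^ 5 * R ^ 2 - 2 * α ^ 4 * R ^ 2 - 4 * α ^ 5 * u ^ 2 * R ^ 2 := by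
    linarith [e1, e2, e3, e4, e5]
  rw [ge_iff_le, ← sub_nonneg]
  have hR8 : (0 : ℝ) < R ^ 8 := by positivity
  set_option maxHeartbeats 2000000 in
  have hEq : (119 / 16 * (2 * α / R * u) ^ 4 * (2 * α / R ^ 2)
      + 3 * (2 * α / R * u) ^ 2 * ((2 * α * y / R ^ 2) ^ 2 + (2 * α * z / R ^ 2) ^ 2)
        * (2 * α / R ^ 2)
      - 18 * (2 * α / R ^ 2) ^ 3 + 6 * (2 * α / R * p) * (2 * α / R * u) ^ 2
      + (2 * α * u * q + 2 * α * p ^ 2)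
      + 2 * (2 * α / R * p) * ((2 * α * y / R ^ 2) ^ 2 + (2 * α * z / R ^ 2) ^ 2))
      - (38 * α ^ 5 / R ^ 6 + α ^ 3 / R ^ 4 * (2 * α / R ^ 2 + (2 * α / R * u) ^ 2))
      = (238 * α ^ 5 * u ^ 4 * R ^ 2 + 96 * α ^ 5 * u ^ 2 * (y ^ 2 + z ^ 2)
      + 16 * α ^ 3 * p * (y ^ 2 + z ^ 2) * R ^ 3 - 144 * α ^ 3 * R ^ 2
      + 48 * α ^ 3 * p * u ^ 2 * R ^ 5 + 2 * α * u * q * R ^ 8 + 2 * α * p ^ 2 * R ^ 8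
      - 38 * α ^ 5 * R ^ 2 - 2 * α ^ 4 * R ^ 2 - 4 * α ^ 5 * u ^ 2 * R ^ 2) / R ^ 8 := by
    field_simp
    ring
  rw [hEq]
  exact div_nonneg hE hR8.le
end

section
/- Let R > 1, α ≥ C̄R^{3/2} with C̄ = max(‖φ'‖_∞, ‖φ''‖_∞, 1), φ ∈ C^∞([0,1]), and ψ as above. Then at every point where |x/R + φ(t)| ≥ 1: (11/4)ψₓ²ψₓₓ + 2(ψ_y² + ψ_z²)ψₓₓ − 6ψₓₜ ≥ 10α³/R⁴, and (1/2)ψₓ²ψₓₓ − 2ψₓₜ ≥ 0. -/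
open Real

/-- For `ψ(x,y,z,t) = α[(x/R + φ(t))² + y²/R² + z²/R²]` with `R > 1`,
`C̄ ≥ max(‖φ'‖_∞, ‖φ''‖_∞, 1)` and `α ≥ C̄ R^{3/2}`, at every point where
`|x/R + φ(t)| ≥ 1` one has
`(11/4)ψₓ²ψₓₓ + 2(ψ_y² + ψ_z²)ψₓₓ − 6ψₓₜ ≥ 10α³/R⁴` and
`(1/2)ψₓ²ψₓₓ − 2ψₓₜ ≥ 0`. -/
theorem stmt_13 (R α Cb x y z t : ℝ) (φ : ℝ → ℝ) (hφ : ContDiff ℝ (⊤ : ℕ∞) φ)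
    (hR : 1 < R) (ht : t ∈ Set.Icc (0 : ℝ) 1)
    (hCb1 : 1 ≤ Cb)
    (hCb' : ∀ s ∈ Set.Icc (0 : ℝ) 1, |deriv φ s| ≤ Cb)
    (hCb'' : ∀ s ∈ Set.Icc (0 : ℝ) 1, |deriv (deriv φ) s| ≤ Cb)
    (hα : Cb * R ^ ((3 : ℝ) / 2) ≤ α)
    (hx : 1 ≤ |x / R + φ t|)
    (ψx ψy ψz ψxx ψxt : ℝ)
    (hψx : ψx = 2 * α / R * (x / R + φ t))
    (hψy : ψy = 2 * α * y / R ^ 2)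
    (hψz : ψz = 2 * α * z / R ^ 2)
    (hψxx : ψxx = 2 * α / R ^ 2)
    (hψxt : ψxt = 2 * α / R * deriv φ t) :
    11 / 4 * ψx ^ 2 * ψxx + 2 * (ψy ^ 2 + ψz ^ 2) * ψxx - 6 * ψxt
        ≥ 10 * α ^ 3 / R ^ 4 ∧
    1 / 2 * ψx ^ 2 * ψxx - 2 * ψxt ≥ 0 := by
  have hR0 : (0:ℝ) < R := lt_trans one_pos hR
  have hRs1 : (1:ℝ) ≤ R ^ ((3 : ℝ) / 2) := Real.one_le_rpow hR.le (by norm_num)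
  have hα0 : (0:ℝ) < α := lt_of_lt_of_le (by nlinarith) hα
  have hsq : (R ^ ((3 : ℝ) / 2)) ^ 2 = R ^ 3 := by
    rw [← Real.rpow_natCast (R ^ ((3:ℝ)/2)) 2, ← Real.rpow_mul hR0.le,
      ← Real.rpow_natCast R 3]
    norm_num
  have key : Cb * R ^ 3 ≤ α ^ 2 := by
    have h1 : (Cb * R ^ ((3:ℝ)/2)) ^ 2 ≤ α ^ 2 :=
      pow_le_pow_left₀ (by positivity) hα 2
    rw [mul_pow, hsq] at h1
    nlinarith
  have hφt : deriv φ t ≤ Cb := (abs_le.mp (hCb' t ht)).2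
  set u := x / R + φ t with hu
  have hu2 : 1 ≤ u ^ 2 := by
    have := sq_abs u
    nlinarith
  clear_value u
  subst hψx hψy hψz hψxx hψxt
  have hR4 : (0:ℝ) < R ^ 4 := by positivity
  have hR6 : (0:ℝ) < R ^ 6 := by positivity
  have hCbR : Cb * R ^ 5 ≤ α ^ 2 * R ^ 2 := by nlinarith
  have main1 : 0 ≤ 22 * α ^ 3 * u ^ 2 * R ^ 2 + 16 * α ^ 3 * (y ^ 2 + z ^ 2)
      - 12 * α * deriv φ t * R ^ 5 - 10 * α ^ 3 * R ^ 2 := by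
    nlinarith [mul_le_mul_of_nonneg_left hCbR hα0.le,
      mul_nonneg (by positivity : (0:ℝ) ≤ 16 * α ^ 3) (by positivity : (0:ℝ) ≤ y ^ 2 + z ^ 2),
      mul_le_mul_of_nonneg_left hφt (by positivity : (0:ℝ) ≤ 12 * α * R ^ 5),
      mul_nonneg (mul_nonneg (by positivity : (0:ℝ) ≤ 22 * α ^ 3) (by linarith : (0:ℝ) ≤ u ^ 2 - 1)) (by positivity : (0:ℝ) ≤ R ^ 2)]
  have main2 : 0 ≤ 4 * α ^ 3 * u ^ 2 - 4 * α * deriv φ t * R ^ 3 := by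
    nlinarith [mul_le_mul_of_nonneg_left key hα0.le,
      mul_le_mul_of_nonneg_left hφt (by positivity : (0:ℝ) ≤ 4 * α * R ^ 3),
      mul_nonneg (by positivity : (0:ℝ) ≤ 4 * α ^ 3) (by linarith : (0:ℝ) ≤ u ^ 2 - 1)]
  constructor
  · rw [ge_iff_le, ← sub_nonneg]
    have heq : 11 / 4 * (2 * α / R * u) ^ 2 * (2 * α / R ^ 2)
        + 2 * ((2 * α * y / R ^ 2) ^ 2 + (2 * α * z / R ^ 2) ^ 2) * (2 * α / R ^ 2)
        - 6 * (2 * α / R * deriv φ t) - 10 * α ^ 3 / R ^ 4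
        = (22 * α ^ 3 * u ^ 2 * R ^ 2 + 16 * α ^ 3 * (y ^ 2 + z ^ 2)
          - 12 * α * deriv φ t * R ^ 5 - 10 * α ^ 3 * R ^ 2) / R ^ 6 := by
      rw [eq_div_iff (by positivity : (R:ℝ) ^ 6 ≠ 0)]
      field_simp
      ring
    rw [heq]
    exact div_nonneg main1 hR6.le
  · rw [ge_iff_le, ← sub_nonneg, sub_zero]
    have heq : 1 / 2 * (2 * α / R * u) ^ 2 * (2 * α / R ^ 2)
        - 2 * (2 * α / R * deriv φ t)
        = (4 * α ^ 3 * u ^ 2 - 4 * α * deriv φ t * R ^ 3) / R ^ 4 := by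
      rw [eq_div_iff (by positivity : (R:ℝ) ^ 4 ≠ 0)]
      field_simp
      ring
    rw [heq]
    exact div_nonneg main2 hR4.le
end
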